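/- Let M be an A-module algebra over a weak *-Hopf algebra A, let μ_▷ : A_L → M denote the map a ↦ a▷1_M, and set K_▷ := {a ∈ A : a▷m = 0 for all m ∈ M}. Then: (i) (A_L∩A_R)▷1_M is contained in the center of M; (ii) (A_L∩C(A))▷1_M = C(A)▷1_M, and this set is contained in the center of M^A (C(A) denotes the center of A); (iii) the kernel of μ_▷ equals A_L∩K_▷, i.e. for a ∈ A_L, a▷1_M = 0 implies a▷m = 0 for all m ∈ M. -/

import Mathlib

open scoped TensorProduct

noncomputable section

/-- The componentwise star operation on a tensor product of star algebras,
as an additive map (it is conjugate-linear, hence not a `LinearMap`). -/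
def tensorStar (A B : Type) [Ring A] [Algebra ℂ A] [StarRing A] [StarModule ℂ A]
    [Ring B] [Algebra ℂ B] [StarRing B] [StarModule ℂ B] :
    A ⊗[ℂ] B →+ A ⊗[ℂ] B :=
  TensorProduct.liftAddHom
    (AddMonoidHom.mk'
      (fun a => AddMonoidHom.mk' (fun b => star a ⊗ₜ[ℂ] star b)
        (fun x y => by
          show star a ⊗ₜ[ℂ] star (x + y) = star a ⊗ₜ[ℂ] star x + star a ⊗ₜ[ℂ] star y
          rw [star_add, TensorProduct.tmul_add]))
      (fun x y => by
        ext b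
        show star (x + y) ⊗ₜ[ℂ] star b = star x ⊗ₜ[ℂ] star b + star y ⊗ₜ[ℂ] star b
        rw [star_add, TensorProduct.add_tmul]))
    (fun r a b => by
      show star (r • a) ⊗ₜ[ℂ] star b = star a ⊗ₜ[ℂ] star (r • b)
      rw [star_smul, star_smul, TensorProduct.smul_tmul])

/-- A finite dimensional weak `*`-Hopf algebra over `ℂ` (axioms of [BNS]),
together with the derived properties of the antipode (which follow from the
axioms and are included as fields for convenience). -/
structure WeakHopfAlgebra (A : Type) [Ring A] [Algebra ℂ A] [StarRing A] [StarModule ℂ A] where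
  Δ : A →ₗ[ℂ] A ⊗[ℂ] A
  ε : A →ₗ[ℂ] ℂ
  S : A →ₗ[ℂ] A
  Sinv : A →ₗ[ℂ] A
  finite : FiniteDimensional ℂ A
  Δ_mul : ∀ x y : A, Δ (x * y) = Δ x * Δ y
  Δ_star : ∀ x : A, Δ (star x) = tensorStar A A (Δ x)
  coassoc : ∀ x : A,
    (TensorProduct.assoc ℂ A A A) ((TensorProduct.map Δ (LinearMap.id : A →ₗ[ℂ] A)) (Δ x))
      = (TensorProduct.map (LinearMap.id : A →ₗ[ℂ] A) Δ) (Δ x)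
  counit_left : ∀ x : A,
    (TensorProduct.lid ℂ A) ((TensorProduct.map ε (LinearMap.id : A →ₗ[ℂ] A)) (Δ x)) = x
  counit_right : ∀ x : A,
    (TensorProduct.rid ℂ A) ((TensorProduct.map (LinearMap.id : A →ₗ[ℂ] A) ε) (Δ x)) = x
  unit_weak :
    (Δ 1 ⊗ₜ[ℂ] (1 : A)) * ((TensorProduct.assoc ℂ A A A).symm ((1 : A) ⊗ₜ[ℂ] Δ 1))
      = (TensorProduct.map Δ (LinearMap.id : A →ₗ[ℂ] A)) (Δ 1)
  unit_weak' :
    ((TensorProduct.assoc ℂ A A A).symm ((1 : A) ⊗ₜ[ℂ] Δ 1)) * (Δ 1 ⊗ₜ[ℂ] (1 : A))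
      = (TensorProduct.map Δ (LinearMap.id : A →ₗ[ℂ] A)) (Δ 1)
  counit_weak : ∀ x y z : A,
    ε (x * y * z) = (TensorProduct.lid ℂ ℂ)
      ((TensorProduct.map (ε ∘ₗ LinearMap.mulLeft ℂ x) (ε ∘ₗ LinearMap.mulRight ℂ z)) (Δ y))
  counit_weak' : ∀ x y z : A,
    ε (x * y * z) = (TensorProduct.lid ℂ ℂ)
      ((TensorProduct.map (ε ∘ₗ LinearMap.mulRight ℂ z) (ε ∘ₗ LinearMap.mulLeft ℂ x)) (Δ y))
  antipode_left : ∀ x : A,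
    LinearMap.mul' ℂ A ((TensorProduct.map S (LinearMap.id : A →ₗ[ℂ] A)) (Δ x))
      = (TensorProduct.rid ℂ A)
          ((TensorProduct.map (LinearMap.id : A →ₗ[ℂ] A) (ε ∘ₗ LinearMap.mulLeft ℂ x)) (Δ 1))
  antipode_right : ∀ x : A,
    LinearMap.mul' ℂ A ((TensorProduct.map (LinearMap.id : A →ₗ[ℂ] A) S) (Δ x))
      = (TensorProduct.lid ℂ A)
          ((TensorProduct.map (ε ∘ₗ LinearMap.mulRight ℂ x) (LinearMap.id : A →ₗ[ℂ] A)) (Δ 1))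
  antipode_mid : ∀ x : A,
    LinearMap.mul' ℂ A
      ((TensorProduct.map (LinearMap.mul' ℂ A ∘ₗ TensorProduct.map S (LinearMap.id : A →ₗ[ℂ] A)) S)
        ((TensorProduct.map Δ (LinearMap.id : A →ₗ[ℂ] A)) (Δ x))) = S x
  S_Sinv : ∀ x : A, S (Sinv x) = x
  Sinv_S : ∀ x : A, Sinv (S x) = x
  S_antimul : ∀ x y : A, S (x * y) = S y * S x
  S_anticomul : ∀ x : A, Δ (S x) = (TensorProduct.comm ℂ A A) ((TensorProduct.map S S) (Δ x))
  S_star : ∀ x : A, star (S (star x)) = Sinv x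

/-- The set of elements commuting with everything. -/
def centerSet (R : Type) [Mul R] : Set R := {z | ∀ r : R, z * r = r * z}

namespace WeakHopfAlgebra

variable {A : Type} [Ring A] [Algebra ℂ A] [StarRing A] [StarModule ℂ A]

/-- `Σ x₍₁₎ · S(x₍₂₎)`. -/
def swIdS (W : WeakHopfAlgebra A) (x : A) : A :=
  LinearMap.mul' ℂ A ((TensorProduct.map (LinearMap.id : A →ₗ[ℂ] A) W.S) (W.Δ x))

/-- `Σ S(x₍₁₎) · x₍₂₎`. -/
def swSId (W : WeakHopfAlgebra A) (x : A) : A :=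
  LinearMap.mul' ℂ A ((TensorProduct.map W.S (LinearMap.id : A →ₗ[ℂ] A)) (W.Δ x))

/-- `Σ x₍₂₎ · S⁻¹(x₍₁₎)`. -/
def swIdSinv (W : WeakHopfAlgebra A) (x : A) : A :=
  LinearMap.mul' ℂ A
    ((TensorProduct.map (LinearMap.id : A →ₗ[ℂ] A) W.Sinv) ((TensorProduct.comm ℂ A A) (W.Δ x)))

/-- `Σ S⁻¹(x₍₂₎) · x₍₁₎`. -/
def swSinvId (W : WeakHopfAlgebra A) (x : A) : A :=
  LinearMap.mul' ℂ A
    ((TensorProduct.map W.Sinv (LinearMap.id : A →ₗ[ℂ] A)) ((TensorProduct.comm ℂ A A) (W.Δ x)))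

/-- The left subalgebra `A_L = {(φ ⊗ id)(Δ 1) : φ ∈ A*}`. -/
def AL (W : WeakHopfAlgebra A) : Set A :=
  {a | ∃ φ : A →ₗ[ℂ] ℂ,
    a = (TensorProduct.lid ℂ A) ((TensorProduct.map φ (LinearMap.id : A →ₗ[ℂ] A)) (W.Δ 1))}

/-- The right subalgebra `A_R = {(id ⊗ φ)(Δ 1) : φ ∈ A*}`. -/
def AR (W : WeakHopfAlgebra A) : Set A :=
  {a | ∃ φ : A →ₗ[ℂ] ℂ,
    a = (TensorProduct.rid ℂ A) ((TensorProduct.map (LinearMap.id : A →ₗ[ℂ] A) φ) (W.Δ 1))}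

/-- A left integral: `a · l = Σ a₍₁₎ S(a₍₂₎) · l` for all `a`. -/
def IsLeftIntegral (W : WeakHopfAlgebra A) (l : A) : Prop := ∀ a : A, a * l = W.swIdS a * l

/-- A right integral: `r · a = r · Σ S(a₍₁₎) a₍₂₎` for all `a`. -/
def IsRightIntegral (W : WeakHopfAlgebra A) (r : A) : Prop := ∀ a : A, r * a = r * W.swSId a

/-- A normalized Haar integral. -/
def IsHaar (W : WeakHopfAlgebra A) (h : A) : Prop :=
  W.IsLeftIntegral h ∧ W.IsRightIntegral h ∧ W.swSId h = 1 ∧ W.swIdS h = 1 ∧ W.S h = h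

/-- The canonical left action of a functional `λ ∈ A*` on `A`:
`λ ⇀ a = Σ a₍₁₎ · ⟨λ, a₍₂₎⟩`. -/
def lact (W : WeakHopfAlgebra A) (lam : A →ₗ[ℂ] ℂ) : A →ₗ[ℂ] A :=
  (TensorProduct.rid ℂ A).toLinearMap ∘ₗ
    (TensorProduct.map (LinearMap.id : A →ₗ[ℂ] A) lam) ∘ₗ W.Δ

/-- `λ ∈ A*` is a left integral of the dual weak Hopf algebra:
`λ ⇀ a ∈ A_L` for all `a ∈ A`. -/
def IsDualLeftIntegral (W : WeakHopfAlgebra A) (lam : A →ₗ[ℂ] ℂ) : Prop :=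
  ∀ a : A, W.lact lam a ∈ W.AL

/-- A dual pair of left integrals `(l, λ)`. -/
def IsDualPair (W : WeakHopfAlgebra A) (l : A) (lam : A →ₗ[ℂ] ℂ) : Prop :=
  W.IsLeftIntegral l ∧ W.IsDualLeftIntegral lam ∧
  W.lact lam l = 1 ∧
  (∀ a : A,
    (TensorProduct.rid ℂ A)
      ((TensorProduct.map (LinearMap.id : A →ₗ[ℂ] A) (lam ∘ₗ LinearMap.mulLeft ℂ a)) (W.Δ l))
      = W.S a) ∧
  (∀ a : A,
    (TensorProduct.lid ℂ A)
      ((TensorProduct.map (lam ∘ₗ LinearMap.mulRight ℂ a ∘ₗ W.Sinv)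
        (LinearMap.id : A →ₗ[ℂ] A)) (W.Δ l)) = a)

end WeakHopfAlgebra

/-- A (left) module `*`-algebra over a weak `*`-Hopf algebra. -/
structure ModuleAlgebra {A : Type} [Ring A] [Algebra ℂ A] [StarRing A] [StarModule ℂ A]
    (W : WeakHopfAlgebra A) (M : Type) [Ring M] [Algebra ℂ M] [StarRing M] [StarModule ℂ M] where
  act : A →ₗ[ℂ] M →ₗ[ℂ] M
  act_mul : ∀ (a b : A) (m : M), act (a * b) m = act a (act b m)
  act_one : ∀ m : M, act 1 m = m
  act_mul' : ∀ (a : A) (m n : M),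
    act a (m * n) = LinearMap.mul' ℂ M ((TensorProduct.map (act.flip m) (act.flip n)) (W.Δ a))
  act_star : ∀ (a : A) (m : M), star (act a m) = act (star (W.S a)) (star m)
  act_unit : ∀ a : A, act a 1 = act (W.swIdS a) 1

namespace ModuleAlgebra

variable {A : Type} [Ring A] [Algebra ℂ A] [StarRing A] [StarModule ℂ A]
variable {M : Type} [Ring M] [Algebra ℂ M] [StarRing M] [StarModule ℂ M]
variable {W : WeakHopfAlgebra A}

/-- `M_R = A ▷ 1_M`. -/
def MR (MA : ModuleAlgebra W M) : Set M := Set.range fun a : A => MA.act a 1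

/-- The fixed point algebra `M^A`. -/
def fixed (MA : ModuleAlgebra W M) : Set M :=
  {n | ∀ (a : A) (m : M), MA.act a (m * n) = MA.act a m * n}

end ModuleAlgebra

section Crossed

variable {A : Type} [Ring A] [Algebra ℂ A] [StarRing A] [StarModule ℂ A]
variable {M : Type} [Ring M] [Algebra ℂ M] [StarRing M] [StarModule ℂ M]
variable {W : WeakHopfAlgebra A}

/-- The subspace of `M ⊗ A` by which one divides to form the crossed product
`M ⋊ A = M ⊗_{A_L} A`. -/
def crossedRel (MA : ModuleAlgebra W M) : Submodule ℂ (M ⊗[ℂ] A) :=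
  Submodule.span ℂ
    {x | ∃ (m : M) (a b : A), b ∈ W.AL ∧
      x = (m * MA.act b 1) ⊗ₜ[ℂ] a - m ⊗ₜ[ℂ] (b * a)}

/-- The crossed product `M ⋊ A` as a vector space. -/
abbrev Crossed (MA : ModuleAlgebra W M) : Type := (M ⊗[ℂ] A) ⧸ crossedRel MA

/-- The canonical projection `M ⊗ A → M ⋊ A`; `cmk MA (m ⊗ₜ a)` is `m ⋊ a`. -/
def cmk (MA : ModuleAlgebra W M) : M ⊗[ℂ] A →ₗ[ℂ] Crossed MA := (crossedRel MA).mkQ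

/-- The embedding `M → M ⋊ A`, `m ↦ m ⋊ 1`. -/
def iM (MA : ModuleAlgebra W M) : M →ₗ[ℂ] Crossed MA :=
  cmk MA ∘ₗ (TensorProduct.mk ℂ M A).flip (1 : A)

/-- The map `A → M ⋊ A`, `a ↦ 1 ⋊ a`. -/
def iA (MA : ModuleAlgebra W M) : A →ₗ[ℂ] Crossed MA :=
  cmk MA ∘ₗ (TensorProduct.mk ℂ M A) (1 : M)

/-- The unit `1 ⋊ 1` of `M ⋊ A`. -/
def oneC (MA : ModuleAlgebra W M) : Crossed MA := cmk MA ((1 : M) ⊗ₜ[ℂ] (1 : A))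

/-- The multiplication of the crossed product `M ⋊ A`
(whose existence is the content of Theorem 3.1), as a bundled bilinear map
together with its defining formula on generators:
`(m ⋊ a)(m' ⋊ a') = Σ m (a₍₁₎ ▷ m') ⋊ a₍₂₎ a'`. -/
structure CrossedMul (MA : ModuleAlgebra W M) where
  mul : Crossed MA →ₗ[ℂ] Crossed MA →ₗ[ℂ] Crossed MA
  mul_def : ∀ (m m' : M) (a a' : A),
    mul (cmk MA (m ⊗ₜ[ℂ] a)) (cmk MA (m' ⊗ₜ[ℂ] a'))
      = cmk MA ((TensorProduct.map ((LinearMap.mulLeft ℂ m) ∘ₗ (MA.act.flip m'))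
          (LinearMap.mulRight ℂ a')) (W.Δ a))

/-- The star operation of the crossed product `M ⋊ A`
(whose existence is part of Theorem 3.1):
`(m ⋊ a)* = Σ (a₍₁₎* ▷ m*) ⋊ a₍₂₎*`. -/
structure CrossedStar (MA : ModuleAlgebra W M) where
  st : Crossed MA →+ Crossed MA
  st_smul : ∀ (c : ℂ) (x : Crossed MA), st (c • x) = (starRingEnd ℂ c) • st x
  st_def : ∀ (m : M) (a : A),
    st (cmk MA (m ⊗ₜ[ℂ] a))
      = cmk MA ((TensorProduct.map (MA.act.flip (star m)) (LinearMap.id : A →ₗ[ℂ] A))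
          (W.Δ (star a)))

/-- The multiplication on `(M ⋊ A) ⊗ B` induced by a crossed product
multiplication on `M ⋊ A` and the algebra structure of `B`. -/
def mulT (MA : ModuleAlgebra W M) (CS : CrossedMul MA) (B : Type) [Ring B] [Algebra ℂ B] :
    Crossed MA ⊗[ℂ] B →ₗ[ℂ] Crossed MA ⊗[ℂ] B →ₗ[ℂ] Crossed MA ⊗[ℂ] B :=
  TensorProduct.lift
    ((TensorProduct.mapBilinear (RingHom.id ℂ) (Crossed MA) B (Crossed MA) B).compl₁₂ CS.mul
      (LinearMap.mul ℂ B))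

end Crossed

/-!
By coassociativity and the weak unit axioms, `(id ⊗ Δ)(Δ 1)` equals both `Δ1₂₃ Δ1₁₂` and
`Δ1₁₂ Δ1₂₃`; slicing the first leg shows `Δ a = Δ 1 (a ⊗ 1) = (a ⊗ 1) Δ 1` for `a ∈ A_L`, and
similarly `Δ a = Δ 1 (1 ⊗ a)` for `a ∈ A_R`. Hence `a ▷ m = (a ▷ 1) m` on `A_L` and
`a ▷ m = m (a ▷ 1)` on `A_R`, which gives (i) and (iii).

For (ii), the antipode axiom turns `a ▷ 1` into `ε_t(a) ▷ 1` with `ε_t(a) ∈ A_L`. For `a ∈ A_L`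
one has `x a = Σ ε(x₍₁₎ a) x₍₂₎` and `a x = Σ ε(a x₍₁₎) x₍₂₎`, and for central `z` the weak counit
axioms give `ε(y ε_t(z)) = ε(y z) = ε(ε_t(z) y)`, so `ε_t(z)` is again central. A central element
of `A_L` acts on `1` by an element commuting with `A ▷ 1`, which makes it fixed. Finally
`z ▷ 1 = ε_s(z) ▷ 1` with `ε_s(z) ∈ A_R`, and for fixed `n` both `n (z ▷ 1)` and `(z ▷ 1) n`
equal `ε_s(z) ▷ n`.
-/

open TensorProduct LinearMap

section Slice

variable {R A B C : Type*} [CommSemiring R]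

def sliceLeft [AddCommMonoid A] [Module R A] [AddCommMonoid B] [Module R B]
    (φ : A →ₗ[R] R) : A ⊗[R] B →ₗ[R] B :=
  (TensorProduct.lid R B).toLinearMap ∘ₗ map φ LinearMap.id

def sliceRight [AddCommMonoid A] [Module R A] [AddCommMonoid B] [Module R B]
    (ψ : B →ₗ[R] R) : A ⊗[R] B →ₗ[R] A :=
  (TensorProduct.rid R A).toLinearMap ∘ₗ map LinearMap.id ψ

section Module

variable [AddCommMonoid A] [Module R A] [AddCommMonoid B] [Module R B]
  [AddCommMonoid C] [Module R C]

@[simp]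
theorem sliceLeft_tmul (φ : A →ₗ[R] R) (a : A) (b : B) : sliceLeft φ (a ⊗ₜ b) = φ a • b := rfl

@[simp]
theorem sliceRight_tmul (ψ : B →ₗ[R] R) (a : A) (b : B) : sliceRight ψ (a ⊗ₜ b) = ψ b • a := rfl

theorem sliceLeft_lTensor (φ : A →ₗ[R] R) (f : B →ₗ[R] C) (t : A ⊗[R] B) :
    sliceLeft φ (lTensor A f t) = f (sliceLeft φ t) := by
  induction t using TensorProduct.induction_on with
  | zero => simp
  | tmul a b => simp
  | add t u ht hu => simp [ht, hu]

theorem sliceRight_rTensor (ψ : B →ₗ[R] R) (f : A →ₗ[R] C) (t : A ⊗[R] B) :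
    sliceRight ψ (rTensor B f t) = f (sliceRight ψ t) := by
  induction t using TensorProduct.induction_on with
  | zero => simp
  | tmul a b => simp
  | add t u ht hu => simp [ht, hu]

theorem apply_sliceLeft (φ : A →ₗ[R] R) (ψ : B →ₗ[R] R) (t : A ⊗[R] B) :
    ψ (sliceLeft φ t) = TensorProduct.lid R R (map φ ψ t) := by
  induction t using TensorProduct.induction_on with
  | zero => simp
  | tmul a b => simp
  | add t u ht hu => simp [ht, hu]

theorem apply_sliceRight (φ : A →ₗ[R] R) (ψ : B →ₗ[R] R) (t : A ⊗[R] B) :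
    φ (sliceRight ψ t) = TensorProduct.lid R R (map φ ψ t) := by
  induction t using TensorProduct.induction_on with
  | zero => simp
  | tmul a b => simp [mul_comm]
  | add t u ht hu => simp [ht, hu]

end Module

section Algebra

variable [Semiring A] [Algebra R A] [Semiring B] [Algebra R B] [Semiring C] [Algebra R C]

theorem tensorAssoc_mul (x y : (A ⊗[R] B) ⊗[R] C) :
    TensorProduct.assoc R A B C (x * y)
      = TensorProduct.assoc R A B C x * TensorProduct.assoc R A B C y :=
  map_mul (Algebra.TensorProduct.assoc R R R A B C) x y

theorem sliceLeft_one_tmul_mul (φ : A →ₗ[R] R) (b : B) (t : A ⊗[R] B) :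
    sliceLeft φ ((1 ⊗ₜ b) * t) = b * sliceLeft φ t := by
  induction t using TensorProduct.induction_on with
  | zero => simp
  | tmul a b' => simp
  | add t u ht hu => simp [mul_add, ht, hu]

theorem sliceLeft_mul_one_tmul (φ : A →ₗ[R] R) (b : B) (t : A ⊗[R] B) :
    sliceLeft φ (t * (1 ⊗ₜ b)) = sliceLeft φ t * b := by
  induction t using TensorProduct.induction_on with
  | zero => simp
  | tmul a b' => simp
  | add t u ht hu => simp [add_mul, ht, hu]

theorem sliceLeft_mul_tmul_one (φ : A →ₗ[R] R) (a : A) (t : A ⊗[R] B) :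
    sliceLeft φ (t * (a ⊗ₜ 1)) = sliceLeft (φ ∘ₗ mulRight R a) t := by
  induction t using TensorProduct.induction_on with
  | zero => simp
  | tmul a' b => simp
  | add t u ht hu => simp [add_mul, ht, hu]

theorem sliceLeft_tmul_one_mul (φ : A →ₗ[R] R) (a : A) (t : A ⊗[R] B) :
    sliceLeft φ ((a ⊗ₜ 1) * t) = sliceLeft (φ ∘ₗ mulLeft R a) t := by
  induction t using TensorProduct.induction_on with
  | zero => simp
  | tmul a' b => simp
  | add t u ht hu => simp [mul_add, ht, hu]

theorem sliceRight_tmul_one_mul (ψ : B →ₗ[R] R) (a : A) (t : A ⊗[R] B) :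
    sliceRight ψ ((a ⊗ₜ 1) * t) = a * sliceRight ψ t := by
  induction t using TensorProduct.induction_on with
  | zero => simp
  | tmul a' b => simp
  | add t u ht hu => simp [mul_add, ht, hu]

theorem sliceLeft_assoc_tmul_one (φ : A →ₗ[R] R) (t : A ⊗[R] B) :
    sliceLeft φ (TensorProduct.assoc R A B C (t ⊗ₜ 1)) = sliceLeft φ t ⊗ₜ 1 := by
  induction t using TensorProduct.induction_on with
  | zero => simp
  | tmul a b => simp [TensorProduct.smul_tmul']
  | add t u ht hu => simp [add_tmul, ht, hu]

theorem sliceRight_assoc_symm_one_tmul (ψ : C →ₗ[R] R) (t : B ⊗[R] C) :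
    sliceRight ψ ((TensorProduct.assoc R A B C).symm (1 ⊗ₜ t)) = 1 ⊗ₜ sliceRight ψ t := by
  induction t using TensorProduct.induction_on with
  | zero => simp
  | tmul b c => simp [TensorProduct.tmul_smul]
  | add t u ht hu => simp [tmul_add, ht, hu]

end Algebra

end Slice

theorem mulRight_eq_mulLeft_of_mem_centerSet {R : Type*} {A : Type} [CommSemiring R] [Semiring A]
    [Algebra R A] {z : A} (hz : z ∈ centerSet A) : mulRight R z = mulLeft R z :=
  LinearMap.ext fun y => (hz y).symm

namespace WeakHopfAlgebra

variable {A : Type} [Ring A] [Algebra ℂ A] [StarRing A] [StarModule ℂ A] (W : WeakHopfAlgebra A)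

def epsT (x : A) : A := sliceLeft (W.ε ∘ₗ mulRight ℂ x) (W.Δ 1)

def epsS (x : A) : A := sliceRight (W.ε ∘ₗ mulLeft ℂ x) (W.Δ 1)

theorem mem_AL {a : A} : a ∈ W.AL ↔ ∃ φ : A →ₗ[ℂ] ℂ, a = sliceLeft φ (W.Δ 1) := Iff.rfl

theorem mem_AR {a : A} : a ∈ W.AR ↔ ∃ ψ : A →ₗ[ℂ] ℂ, a = sliceRight ψ (W.Δ 1) := Iff.rfl

theorem swIdS_eq_epsT (x : A) : W.swIdS x = W.epsT x := W.antipode_right x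

theorem epsT_mem_AL (x : A) : W.epsT x ∈ W.AL := ⟨_, rfl⟩

theorem epsS_mem_AR (x : A) : W.epsS x ∈ W.AR := ⟨_, rfl⟩

theorem sliceLeft_counit_comul (x : A) : sliceLeft W.ε (W.Δ x) = x := W.counit_left x

theorem comul_mul_comul_one (x : A) : W.Δ x * W.Δ 1 = W.Δ x := by
  rw [← W.Δ_mul, mul_one]

theorem comul_one_mul_comul (x : A) : W.Δ 1 * W.Δ x = W.Δ x := by
  rw [← W.Δ_mul, one_mul]

theorem lTensor_comul_comul_one :
    lTensor A W.Δ (W.Δ 1) = (1 ⊗ₜ W.Δ 1) * TensorProduct.assoc ℂ A A A (W.Δ 1 ⊗ₜ 1) := by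
  rw [lTensor, ← W.coassoc, ← W.unit_weak', tensorAssoc_mul, LinearEquiv.apply_symm_apply]

theorem lTensor_comul_comul_one' :
    lTensor A W.Δ (W.Δ 1) = TensorProduct.assoc ℂ A A A (W.Δ 1 ⊗ₜ 1) * (1 ⊗ₜ W.Δ 1) := by
  rw [lTensor, ← W.coassoc, ← W.unit_weak, tensorAssoc_mul, LinearEquiv.apply_symm_apply]

variable {W}

theorem comul_of_mem_AL {a : A} (ha : a ∈ W.AL) : W.Δ a = W.Δ 1 * (a ⊗ₜ 1) := by
  obtain ⟨φ, rfl⟩ := W.mem_AL.1 ha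
  rw [← sliceLeft_lTensor, W.lTensor_comul_comul_one, sliceLeft_one_tmul_mul,
    sliceLeft_assoc_tmul_one]

theorem comul_of_mem_AL' {a : A} (ha : a ∈ W.AL) : W.Δ a = (a ⊗ₜ 1) * W.Δ 1 := by
  obtain ⟨φ, rfl⟩ := W.mem_AL.1 ha
  rw [← sliceLeft_lTensor, W.lTensor_comul_comul_one', sliceLeft_mul_one_tmul,
    sliceLeft_assoc_tmul_one]

theorem comul_of_mem_AR {a : A} (ha : a ∈ W.AR) : W.Δ a = W.Δ 1 * (1 ⊗ₜ a) := by
  obtain ⟨ψ, rfl⟩ := W.mem_AR.1 ha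
  rw [← sliceRight_rTensor, rTensor, ← W.unit_weak, sliceRight_tmul_one_mul,
    sliceRight_assoc_symm_one_tmul]

theorem mul_eq_sliceLeft_of_mem_AL {a : A} (ha : a ∈ W.AL) (x : A) :
    x * a = sliceLeft (W.ε ∘ₗ mulRight ℂ a) (W.Δ x) := by
  rw [← sliceLeft_mul_tmul_one, ← W.comul_mul_comul_one x, mul_assoc, ← comul_of_mem_AL ha,
    ← W.Δ_mul, W.sliceLeft_counit_comul]

theorem mul_eq_sliceLeft_of_mem_AL' {a : A} (ha : a ∈ W.AL) (x : A) :
    a * x = sliceLeft (W.ε ∘ₗ mulLeft ℂ a) (W.Δ x) := by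
  rw [← sliceLeft_tmul_one_mul, ← W.comul_one_mul_comul x, ← mul_assoc, ← comul_of_mem_AL' ha,
    ← W.Δ_mul, W.sliceLeft_counit_comul]

variable (W)

theorem counit_mul_epsT (y z : A) : W.ε (y * W.epsT z) = W.ε (y * z) := by
  rw [← mul_one y, W.counit_weak' y 1 z, mul_one]
  exact apply_sliceLeft _ (W.ε ∘ₗ mulLeft ℂ y) _

theorem counit_epsT_mul_of_mem_centerSet {z : A} (hz : z ∈ centerSet A) (y : A) :
    W.ε (W.epsT z * y) = W.ε (z * y) := by
  rw [← mul_one z, W.counit_weak z 1 y, mul_one, ← mulRight_eq_mulLeft_of_mem_centerSet hz]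
  exact apply_sliceLeft _ (W.ε ∘ₗ mulRight ℂ y) _

theorem counit_mul_epsS_of_mem_centerSet {z : A} (hz : z ∈ centerSet A) (y : A) :
    W.ε (y * W.epsS z) = W.ε (y * z) := by
  rw [← mul_one y, W.counit_weak y 1 z, mul_one, mulRight_eq_mulLeft_of_mem_centerSet hz]
  exact apply_sliceRight (W.ε ∘ₗ mulLeft ℂ y) _ _

theorem epsT_mem_centerSet {z : A} (hz : z ∈ centerSet A) : W.epsT z ∈ centerSet A := by
  intro x
  rw [mul_eq_sliceLeft_of_mem_AL (W.epsT_mem_AL z), mul_eq_sliceLeft_of_mem_AL' (W.epsT_mem_AL z)]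
  congr 2
  ext y
  simp only [comp_apply, mulLeft_apply, mulRight_apply]
  rw [W.counit_epsT_mul_of_mem_centerSet hz, W.counit_mul_epsT, hz]

theorem epsT_epsS_of_mem_centerSet {z : A} (hz : z ∈ centerSet A) :
    W.epsT (W.epsS z) = W.epsT z := by
  unfold epsT
  congr 2
  ext y
  exact W.counit_mul_epsS_of_mem_centerSet hz y

end WeakHopfAlgebra

namespace ModuleAlgebra

variable {A : Type} [Ring A] [Algebra ℂ A] [StarRing A] [StarModule ℂ A]
variable {M : Type} [Ring M] [Algebra ℂ M] [StarRing M] [StarModule ℂ M]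
variable {W : WeakHopfAlgebra A} (MA : ModuleAlgebra W M)

def actPair (m n : M) : A ⊗[ℂ] A →ₗ[ℂ] M :=
  LinearMap.mul' ℂ M ∘ₗ map (MA.act.flip m) (MA.act.flip n)

theorem act_mul_eq_actPair (a : A) (m n : M) : MA.act a (m * n) = MA.actPair m n (W.Δ a) :=
  MA.act_mul' a m n

theorem actPair_comul_one (m n : M) : MA.actPair m n (W.Δ 1) = m * n := by
  rw [← act_mul_eq_actPair, MA.act_one]

theorem actPair_mul_tmul_one (m n : M) (a : A) (t : A ⊗[ℂ] A) :
    MA.actPair m n (t * (a ⊗ₜ 1)) = MA.actPair (MA.act a m) n t := by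
  induction t using TensorProduct.induction_on with
  | zero => simp
  | tmul b c => simp [actPair, MA.act_mul]
  | add t u ht hu => simp [add_mul, ht, hu]

theorem actPair_mul_one_tmul (m n : M) (a : A) (t : A ⊗[ℂ] A) :
    MA.actPair m n (t * (1 ⊗ₜ a)) = MA.actPair m (MA.act a n) t := by
  induction t using TensorProduct.induction_on with
  | zero => simp
  | tmul b c => simp [actPair, MA.act_mul]
  | add t u ht hu => simp [add_mul, ht, hu]

theorem actPair_eq_mul_of_act_eq {n n' c : M} (h : ∀ s : A, MA.act s n' = MA.act s n * c)
    (m : M) (t : A ⊗[ℂ] A) : MA.actPair m n' t = MA.actPair m n t * c := by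
  induction t using TensorProduct.induction_on with
  | zero => simp
  | tmul b d => simp [actPair, h, mul_assoc]
  | add t u ht hu => simp [add_mul, ht, hu]

theorem act_of_mem_AL {a : A} (ha : a ∈ W.AL) (m : M) : MA.act a m = MA.act a 1 * m := by
  rw [← one_mul m, act_mul_eq_actPair, WeakHopfAlgebra.comul_of_mem_AL ha, actPair_mul_tmul_one,
    actPair_comul_one, one_mul]

theorem act_of_mem_AR {a : A} (ha : a ∈ W.AR) (m : M) : MA.act a m = m * MA.act a 1 := by
  rw [← mul_one m, act_mul_eq_actPair, WeakHopfAlgebra.comul_of_mem_AR ha, actPair_mul_one_tmul,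
    actPair_comul_one, mul_one]

theorem act_one_eq_act_epsT_one (a : A) : MA.act a 1 = MA.act (W.epsT a) 1 := by
  rw [MA.act_unit, W.swIdS_eq_epsT]

theorem act_act_one_of_mem_AL_of_mem_centerSet {z : A} (hzL : z ∈ W.AL) (hz : z ∈ centerSet A)
    (s : A) : MA.act s (MA.act z 1) = MA.act s 1 * MA.act z 1 :=
  calc MA.act s (MA.act z 1) = MA.act z (MA.act s 1) := by rw [← MA.act_mul, ← MA.act_mul, hz]
    _ = MA.act z 1 * MA.act (W.epsT s) 1 := by
      rw [MA.act_of_mem_AL hzL, MA.act_one_eq_act_epsT_one s]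
    _ = MA.act (W.epsT s) 1 * MA.act z 1 := by
      rw [← MA.act_of_mem_AL hzL, ← MA.act_of_mem_AL (W.epsT_mem_AL s), ← MA.act_mul,
        ← MA.act_mul, hz]
    _ = MA.act s 1 * MA.act z 1 := by rw [← MA.act_one_eq_act_epsT_one]

theorem act_one_mem_fixed_of_mem_AL {z : A} (hzL : z ∈ W.AL) (hz : z ∈ centerSet A) :
    MA.act z 1 ∈ MA.fixed := by
  intro b m
  rw [act_mul_eq_actPair,
    MA.actPair_eq_mul_of_act_eq (MA.act_act_one_of_mem_AL_of_mem_centerSet hzL hz),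
    ← act_mul_eq_actPair, mul_one]

theorem act_one_mem_fixed {z : A} (hz : z ∈ centerSet A) : MA.act z 1 ∈ MA.fixed := by
  rw [MA.act_one_eq_act_epsT_one]
  exact MA.act_one_mem_fixed_of_mem_AL (W.epsT_mem_AL z) (W.epsT_mem_centerSet hz)

theorem act_one_mul_comm_of_mem_fixed {z : A} (hz : z ∈ centerSet A) {n : M} (hn : n ∈ MA.fixed) :
    MA.act z 1 * n = n * MA.act z 1 := by
  have hzS : MA.act z 1 = MA.act (W.epsS z) 1 := by
    rw [MA.act_one_eq_act_epsT_one, ← W.epsT_epsS_of_mem_centerSet hz, ← MA.act_one_eq_act_epsT_one]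
  rw [hzS, ← MA.act_of_mem_AR (W.epsS_mem_AR z), ← one_mul n, hn, one_mul]

end ModuleAlgebra

/-- Corollary 2.17 of [NSW]: (i) `(A_L ∩ A_R) ▷ 1_M` is contained in the
center of `M`; (ii) `(A_L ∩ C(A)) ▷ 1_M = C(A) ▷ 1_M` and this set is
contained in the center of the fixed point algebra `M^A`;
(iii) the kernel of `μ_▷ : A_L → M`, `a ↦ a ▷ 1_M`, is `A_L ∩ K_▷`, i.e.
`a ∈ A_L` with `a ▷ 1_M = 0` annihilates all of `M`. -/
theorem mu_kernel_and_center
    {A M : Type} [Ring A] [Algebra ℂ A] [StarRing A] [StarModule ℂ A]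
    [Ring M] [Algebra ℂ M] [StarRing M] [StarModule ℂ M]
    (W : WeakHopfAlgebra A) (MA : ModuleAlgebra W M) :
    (∀ a ∈ W.AL ∩ W.AR, MA.act a 1 ∈ centerSet M)
    ∧ ((fun a : A => MA.act a 1) '' (W.AL ∩ centerSet A)
        = (fun a : A => MA.act a 1) '' (centerSet A))
    ∧ (∀ a ∈ centerSet A,
        MA.act a 1 ∈ MA.fixed ∧ ∀ n ∈ MA.fixed, MA.act a 1 * n = n * MA.act a 1)
    ∧ (∀ a ∈ W.AL, MA.act a 1 = 0 → ∀ m : M, MA.act a m = 0) := by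
  refine ⟨?_, ?_, ?_, ?_⟩
  · rintro a ⟨haL, haR⟩ m
    rw [← MA.act_of_mem_AL haL, MA.act_of_mem_AR haR]
  · refine subset_antisymm (Set.image_mono Set.inter_subset_right) ?_
    rintro _ ⟨z, hz, rfl⟩
    exact ⟨W.epsT z, ⟨W.epsT_mem_AL z, W.epsT_mem_centerSet hz⟩,
      (MA.act_one_eq_act_epsT_one z).symm⟩
  · exact fun z hz => ⟨MA.act_one_mem_fixed hz, fun n hn => MA.act_one_mul_comm_of_mem_fixed hz hn⟩
  · intro a ha h0 m
    rw [MA.act_of_mem_AL ha, h0, zero_mul]
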